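/- Let a, b ∈ ℂ with |a| = |b| = 1, Im(a) > 0, Im(b) > 0 and Im(a) ≠ Im(b). Set c = (a + b)/(1 + a·b) (a real number) and m = ( Im(a·b) + i·|a − conj(b)|·√(Im(a)·Im(b)) ) / Im(a+b). Then the angle ∠(0, m, c) at the vertex m is a right angle; equivalently, Re( conj(m) · (m − c) ) = 0. -/

import Mathlib

/-!
Since `conj a = a⁻¹` and `conj b = b⁻¹`, the point `c` is fixed by conjugation, and taking
imaginary parts in `c (1 + a b) = a + b` gives `c · Im(ab) = Im(a + b)`. The polynomial identity
`Im(ab)² + |a - conj b|² Im a Im b = Im(a + b)²` on the unit circle says that `‖m‖ = 1`, while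
`Re m = Im(ab) / Im(a + b)` is exactly `1 / c`. Hence `Re(conj m (m - c)) = ‖m‖² - c Re m = 0`.
-/

open Complex ComplexConjugate

namespace Complex

variable {a b : ℂ}

lemma im_div_one_add_mul_eq_zero (ha : ‖a‖ = 1) (hb : ‖b‖ = 1) :
    ((a + b) / (1 + a * b)).im = 0 := by
  have ha₀ : a ≠ 0 := norm_ne_zero_iff.mp (by rw [ha]; exact one_ne_zero)
  have hb₀ : b ≠ 0 := norm_ne_zero_iff.mp (by rw [hb]; exact one_ne_zero)
  rw [← conj_eq_iff_im, map_div₀, map_add, map_add, map_one, map_mul, ← inv_eq_conj ha,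
    ← inv_eq_conj hb]
  field_simp
  ring

lemma one_add_mul_ne_zero (ha : ‖a‖ = 1) (hab : a.im ≠ b.im) : 1 + a * b ≠ 0 := by
  intro h
  have hb : -b = conj a := inv_eq_conj ha ▸ eq_inv_of_mul_eq_one_right (by linear_combination -h)
  exact hab (by simpa using (congrArg im hb).symm)

lemma re_mul_im_mul_eq_im_add {c : ℂ} (hc : c.im = 0) (h : c * (1 + a * b) = a + b) :
    c.re * (a * b).im = (a + b).im := by
  simpa [hc] using congrArg im h

lemma im_mul_sq_add_norm_sub_conj_sq_mul_im_mul_im (ha : ‖a‖ = 1) (hb : ‖b‖ = 1) :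
    (a * b).im ^ 2 + ‖a - conj b‖ ^ 2 * (a.im * b.im) = (a + b).im ^ 2 := by
  have hna : a.re ^ 2 + a.im ^ 2 = 1 := by
    simpa [normSq_apply, ha, sq] using (Complex.sq_norm a).symm
  have hnb : b.re ^ 2 + b.im ^ 2 = 1 := by
    simpa [normSq_apply, hb, sq] using (Complex.sq_norm b).symm
  rw [Complex.sq_norm, normSq_apply]
  simp only [mul_im, add_im, sub_re, sub_im, conj_re, conj_im]
  linear_combination (b.im ^ 2 + a.im * b.im) * hna + (a.im ^ 2 + a.im * b.im) * hnb

lemma re_conj_mul_sub_eq {m c : ℂ} (hc : c.im = 0) :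
    (conj m * (m - c)).re = normSq m - c.re * m.re := by
  simp only [mul_re, conj_re, sub_re, conj_im, sub_im, hc, sub_zero, neg_mul, sub_neg_eq_add,
    normSq_apply]
  ring

end Complex

theorem right_angle_at_midpoint (a b : ℂ)
    (ha : ‖a‖ = 1) (hb : ‖b‖ = 1)
    (hia : 0 < a.im) (hib : 0 < b.im) (him : a.im ≠ b.im)
    (c m : ℂ)
    (hc : c = (a + b) / (1 + a * b))
    (hm : m = ((((a * b).im : ℝ) : ℂ) +
        Complex.I * ((‖a - conj b‖ * Real.sqrt (a.im * b.im) : ℝ) : ℂ)) /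
        ((((a + b).im : ℝ) : ℂ))) :
    (conj m * (m - c)).re = 0 := by
  have hc_im : c.im = 0 := hc ▸ im_div_one_add_mul_eq_zero ha hb
  have hc_re : c.re * (a * b).im = (a + b).im :=
    re_mul_im_mul_eq_im_add hc_im (by rw [hc, div_mul_cancel₀ _ (one_add_mul_ne_zero ha him)])
  have hs : (a + b).im ≠ 0 := by rw [add_im]; positivity
  have hm_re : m.re = (a * b).im / (a + b).im := by
    simp only [hm, div_ofReal_re, add_re, ofReal_re, I_mul_re, ofReal_im, neg_zero, add_zero]
  have hm_im : m.im = ‖a - conj b‖ * Real.sqrt (a.im * b.im) / (a + b).im := by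
    simp only [hm, div_ofReal_im, add_im, ofReal_im, I_mul_im, ofReal_re, zero_add]
  have hm_normSq : normSq m = 1 := by
    rw [normSq_apply, hm_re, hm_im]
    field_simp
    rw [← im_mul_sq_add_norm_sub_conj_sq_mul_im_mul_im ha hb, Real.sq_sqrt (by positivity)]
  rw [re_conj_mul_sub_eq hc_im, hm_normSq, hm_re, mul_div_assoc', hc_re, div_self hs, sub_self]
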